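/- In a medium (S,T), if a vacuous message m is stepwise effective for a state S, then m is ineffective for S, that is, Sm = S. -/

import Mathlib

/-!
If `s m ≠ s`, axiom [M1] gives a concise message `n` from `s m` back to `s`; then `m n` is closed
for `s`, hence vacuous by [M2]. Reverses are unique, so in a vacuous message every token occurs
as often as its reverse. Applied to `m` and to `m n`, this balances each token `τ` of `n` against
its reverse `τ'` inside `n`; but `τ'` does occur in `m n` and, `n` being consistent, not in `n`.
So `n` is empty, i.e. `s m = s`.
-/

open scoped Classical symmDiff

universe u

namespace Media

variable {S : Type u}

/-- The state obtained by applying the message (string of tokens) `m` to the state `s`. -/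
def apply (s : S) (m : List (S → S)) : S :=
  m.foldl (fun x τ => τ x) s

/-- The sequence of states `S₀ = s, S₁, …, Sₙ` produced by the message `m` from the state `s`. -/
def produced (s : S) (m : List (S → S)) : List S :=
  m.scanl (fun x τ => τ x) s

/-- `τ'` is a reverse of the token `τ`. -/
def IsReverse (τ τ' : S → S) : Prop :=
  ∀ P Q : S, P ≠ Q → (τ P = Q ↔ τ' Q = P)

/-- The message `m` is stepwise effective for the state `s`. -/
def StepwiseEffective (s : S) (m : List (S → S)) : Prop :=
  List.Chain' (· ≠ ·) (produced s m)

/-- The message `m` is consistent: it does not contain both a token and its reverse. -/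
def Consistent (m : List (S → S)) : Prop :=
  ∀ τ ∈ m, ∀ τ' ∈ m, ¬ IsReverse τ τ'

/-- The message `m` is concise for the state `s`. -/
def Concise (s : S) (m : List (S → S)) : Prop :=
  StepwiseEffective s m ∧ Consistent m ∧ m.Nodup

/-- The message `m` is vacuous: its indices can be partitioned into pairs of
mutually reverse tokens. -/
def Vacuous (m : List (S → S)) : Prop :=
  ∃ f : Fin m.length → Fin m.length, Function.Involutive f ∧
    (∀ i, f i ≠ i) ∧ ∀ i, IsReverse (m.get i) (m.get (f i))

/-- The message `m` is closed for the state `s`. -/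
def Closed (s : S) (m : List (S → S)) : Prop :=
  StepwiseEffective s m ∧ apply s m = s

/-- `(S, T)` is a medium: a token system satisfying axioms [M1] and [M2]. -/
def IsMedium (T : Set (S → S)) : Prop :=
  (∃ a b : S, a ≠ b) ∧ T.Nonempty ∧ (∀ τ ∈ T, τ ≠ id) ∧
  (∀ P Q : S, P ≠ Q →
    ∃ m : List (S → S), (∀ τ ∈ m, τ ∈ T) ∧ Concise P m ∧ apply P m = Q) ∧
  (∀ (P : S) (m : List (S → S)), (∀ τ ∈ m, τ ∈ T) → Closed P m → Vacuous m)

theorem IsReverse.symm {τ τ' : S → S} (h : IsReverse τ τ') : IsReverse τ' τ :=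
  fun P Q hPQ => (h Q P hPQ.symm).symm

theorem IsReverse.unique {τ τ' τ'' : S → S} (h' : IsReverse τ τ') (h'' : IsReverse τ τ'') :
    τ' = τ'' := by
  funext Q
  by_cases hQ : ∃ P, P ≠ Q ∧ τ P = Q
  · obtain ⟨P, hPQ, hτP⟩ := hQ
    rw [(h' P Q hPQ).1 hτP, (h'' P Q hPQ).1 hτP]
  · -- no `P ≠ Q` is sent to `Q` by `τ`, so every reverse of `τ` fixes `Q`
    have fixed {ρ : S → S} (hρ : IsReverse τ ρ) : ρ Q = Q := by
      by_contra hne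
      exact hQ ⟨ρ Q, hne, (hρ (ρ Q) Q hne).2 rfl⟩
    rw [fixed h', fixed h'']

theorem apply_append (s : S) (m n : List (S → S)) : apply s (m ++ n) = apply (apply s m) n :=
  List.foldl_append

theorem stepwiseEffective_cons {s : S} {τ : S → S} {m : List (S → S)} :
    StepwiseEffective s (τ :: m) ↔ s ≠ τ s ∧ StepwiseEffective (τ s) m := by
  rw [StepwiseEffective, StepwiseEffective, produced, produced, List.scanl_cons, List.Chain',
    List.Chain', List.isChain_cons, List.head?_scanl]
  simp

theorem StepwiseEffective.append {s : S} {m n : List (S → S)} (hm : StepwiseEffective s m)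
    (hn : StepwiseEffective (apply s m) n) : StepwiseEffective s (m ++ n) := by
  induction m generalizing s with
  | nil => exact hn
  | cons τ m ih =>
    obtain ⟨hne, hm⟩ := stepwiseEffective_cons.1 hm
    exact stepwiseEffective_cons.2 ⟨hne, ih hm hn⟩

theorem Vacuous.count_eq {m : List (S → S)} (hm : Vacuous m) {τ τ' : S → S}
    (h : IsReverse τ τ') : m.count τ = m.count τ' := by
  obtain ⟨f, hf, -, hrev⟩ := hm
  have count_eq_card (ρ : S → S) : m.count ρ = (Finset.univ.filter fun i => m.get i = ρ).card :=
    (Fin.card_filter_univ_eq_vector_get_eq_count ρ ⟨m, rfl⟩).symm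
  rw [count_eq_card, count_eq_card]
  refine Finset.card_bij (fun i _ => f i) ?_ (fun i _ j _ hij => hf.injective hij) ?_
  · intro i hi
    simp only [Finset.mem_filter, Finset.mem_univ, true_and] at hi ⊢
    exact (hi ▸ hrev i).unique h
  · intro j hj
    simp only [Finset.mem_filter, Finset.mem_univ, true_and] at hj
    refine ⟨f j, ?_, hf j⟩
    simp only [Finset.mem_filter, Finset.mem_univ, true_and]
    exact (hj ▸ hrev j).unique h.symm

theorem Vacuous.exists_isReverse_mem {m : List (S → S)} (hm : Vacuous m) {τ : S → S}
    (hτ : τ ∈ m) : ∃ τ' ∈ m, IsReverse τ τ' := by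
  obtain ⟨f, -, -, hrev⟩ := hm
  obtain ⟨i, rfl⟩ := List.mem_iff_get.1 hτ
  exact ⟨m.get (f i), List.get_mem m (f i), hrev i⟩

theorem Vacuous.eq_nil_of_vacuous_append {m n : List (S → S)} (hm : Vacuous m)
    (hmn : Vacuous (m ++ n)) (hn : Consistent n) : n = [] := by
  refine List.eq_nil_iff_forall_not_mem.2 fun τ hτ => ?_
  obtain ⟨τ', -, hττ'⟩ := hmn.exists_isReverse_mem (List.mem_append_right m hτ)
  have hcount := hmn.count_eq hττ'
  rw [List.count_append, List.count_append, hm.count_eq hττ',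
    List.count_eq_zero.2 fun hτ' => hn τ hτ τ' hτ' hττ'] at hcount
  exact (List.count_pos_iff.2 hτ).ne' (by omega)

end Media

open Media

/-- Lemma 5.4: in a medium, a vacuous message which is stepwise effective for a
state `s` is ineffective for `s`. -/
theorem vacuous_stepwiseEffective_ineffective {S : Type u} {T : Set (S → S)}
    (hM : IsMedium T) (s : S) (m : List (S → S)) (hm : ∀ τ ∈ m, τ ∈ T)
    (hvac : Vacuous m) (hse : StepwiseEffective s m) :
    apply s m = s := by
  obtain ⟨-, -, -, hM1, hM2⟩ := hM
  by_contra hne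
  obtain ⟨n, hnT, ⟨hnse, hncons, -⟩, hn⟩ := hM1 (apply s m) s hne
  have hclosed : Closed s (m ++ n) := ⟨hse.append hnse, by rw [apply_append, hn]⟩
  have hmnT : ∀ τ ∈ m ++ n, τ ∈ T := by
    simpa only [List.mem_append, or_imp, forall_and] using ⟨hm, hnT⟩
  obtain rfl := hvac.eq_nil_of_vacuous_append (hM2 s _ hmnT hclosed) hncons
  exact hne hn
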